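/- Let u, v ∈ (ℝ_{≥0})^N be non-zero non-negative vectors satisfying (‖u‖₁/‖u‖_∞)(‖v‖₁/‖v‖_∞) ≥ CN with C ≥ 1, let D be an N×N doubly stochastic matrix, and define the bilinear form B(x,y) = ∑_{i≠j} D_{ij} x_i y_j. If P is a uniformly random N×N permutation matrix, then for any γ > 0, Pr[B(u, Pv) ≥ e^γ ‖u‖₁‖v‖₁/N] ≤ N² exp(−γ²C/2). -/

import Mathlib

/-!
Dropping the diagonal restriction and summing over `i` first bounds the form by
`∑ j, w j * v (τ j)` with `w = uᵀ D`; as `D` is doubly stochastic, `w` has the ℓ¹ norm of `u` and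
ℓ∞ norm at most that of `u`. After rescaling to entries in `[0, 1]`, the pairing
`X τ = ∑ j, a j * b (τ j)` has mean `μ = (∑ a) (∑ b) / N ≥ C`. Expanding `X ^ k`, a monomial
with `r` distinct indices has permutation average at most `(∑ b / N) ^ r` by Maclaurin's
inequality, and summing over index tuples gives `E[X ^ k] ≤ ∏ l < k, (l + μ)`. Markov's
inequality at `k = ⌈γ C⌉` then bounds the probability by `exp (-γ² C / 2)`, so no decomposition
of `D` into permutation matrices is needed.
-/

open scoped Classical

/-- The ℓ¹ norm of a vector. -/
noncomputable def nl1 {N : ℕ} (u : Fin N → ℝ) : ℝ := ∑ i, |u i|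

/-- The ℓ∞ norm of a vector. -/
noncomputable def nlinf {N : ℕ} (u : Fin N → ℝ) : ℝ := ⨆ i, |u i|

open Finset Nat Matrix

lemma pow_mul_le_mean_pow {u z : ℝ} (m : ℕ) (hu : 0 ≤ u) (hz : 0 ≤ z) :
    u ^ m * z ≤ ((m * u + z) / (m + 1)) ^ (m + 1) := by
  rcases hu.eq_or_lt with rfl | hu
  · cases m <;> simp [pow_succ]; positivity
  set w := (m * u + z) / (m + 1) with hw
  have bernoulli := one_add_mul_le_pow (a := w / u - 1)
    (by linarith [div_nonneg (by positivity : 0 ≤ w) hu.le]) (m + 1)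
  have hlhs : 1 + ((m + 1 : ℕ) : ℝ) * (w / u - 1) = z / u := by
    rw [hw]; field_simp; push_cast; ring
  rw [hlhs, add_sub_cancel, div_pow, div_le_div_iff₀ hu (by positivity), pow_succ,
    ← mul_assoc, mul_comm z] at bernoulli
  exact le_of_mul_le_mul_right bernoulli hu

lemma choose_mul_pow_add_le {u t : ℝ} (n m : ℕ) (hu : 0 ≤ u) (ht : 0 ≤ t) :
    n.choose (m + 1) * u ^ (m + 1) + n.choose m * t * u ^ m ≤
      (n + 1).choose (m + 1) * ((n * u + t) / (n + 1)) ^ (m + 1) := by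
  rcases lt_or_ge n m with hnm | hmn
  · simp [choose_eq_zero_of_lt hnm, choose_eq_zero_of_lt (hnm.trans m.lt_succ_self),
      choose_eq_zero_of_lt (succ_lt_succ hnm)]
  obtain ⟨d, rfl⟩ := Nat.exists_eq_add_of_le hmn
  -- The left side is `(n+1).choose (m+1) * u ^ m * z` for the mean-preserving `z` below.
  set z := (d * u + (m + 1) * t) / (m + d + 1) with hz
  have hd : ((m + d + 1).choose (m + 1) : ℝ) * d = (m + d + 1) * (m + d).choose (m + 1) := by
    have := Nat.choose_mul_succ_eq (m + d) (m + 1)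
    rw [show m + d + 1 - (m + 1) = d by omega] at this
    exact_mod_cast by linarith
  have hm : ((m + d + 1).choose (m + 1) : ℝ) * (m + 1) = (m + d + 1) * (m + d).choose m := by
    exact_mod_cast (Nat.add_one_mul_choose_eq (m + d) m).symm
  have hlhs : ((m + d).choose (m + 1) : ℝ) * u ^ (m + 1) + (m + d).choose m * t * u ^ m =
      (m + d + 1).choose (m + 1) * (u ^ m * z) := by
    rw [hz]
    field_simp
    linear_combination (-(u ^ (m + 1))) * hd + (-(t * u ^ m)) * hm
  have hmean : (m * u + z) / (m + 1) = ((m + d : ℕ) * u + t) / ((m + d : ℕ) + 1) := by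
    rw [hz]
    field_simp
    push_cast
    ring
  rw [hlhs, ← hmean]
  exact mul_le_mul_of_nonneg_left (pow_mul_le_mean_pow m hu (by positivity)) (by positivity)

section Maclaurin

variable {ι R : Type*} [DecidableEq ι]

lemma sum_powersetCard_succ_insert_prod [CommSemiring R] (b : ι → R) {x : ι} {s : Finset ι}
    (hx : x ∉ s) (r : ℕ) :
    ∑ A ∈ (insert x s).powersetCard (r + 1), ∏ i ∈ A, b i =
      ∑ A ∈ s.powersetCard (r + 1), ∏ i ∈ A, b i +
        b x * ∑ A ∈ s.powersetCard r, ∏ i ∈ A, b i := by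
  have hxA : ∀ A ∈ s.powersetCard r, x ∉ A := fun A hA h => hx ((mem_powersetCard.1 hA).1 h)
  rw [powersetCard_succ_insert hx, sum_union, sum_image, mul_sum]
  · congr 1
    exact sum_congr rfl fun A hA => prod_insert (hxA A hA)
  · intro A hA B hB hAB
    simpa [erase_insert (hxA A hA), erase_insert (hxA B hB)] using congrArg (erase · x) hAB
  · refine disjoint_left.2 fun A hA hA' => ?_
    obtain ⟨B, -, rfl⟩ := mem_image.1 hA'
    exact hx ((mem_powersetCard.1 hA).1 (mem_insert_self x B))

/-- Maclaurin's inequality. -/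
theorem sum_powersetCard_prod_le {b : ι → ℝ} {s : Finset ι} (hb : ∀ i ∈ s, 0 ≤ b i) (r : ℕ) :
    ∑ A ∈ s.powersetCard r, ∏ i ∈ A, b i ≤ s.card.choose r * ((∑ i ∈ s, b i) / s.card) ^ r := by
  induction s using Finset.induction_on generalizing r with
  | empty =>
    cases r
    · simp
    · simp [powersetCard_eq_empty.2 (by simp : (∅ : Finset ι).card < _ + 1)]
  | @insert x s hx ih =>
    have hbs : ∀ i ∈ s, 0 ≤ b i := fun i hi => hb i (mem_insert_of_mem hi)
    have hbx : 0 ≤ b x := hb x (mem_insert_self x s)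
    have hmean : (s.card : ℝ) * ((∑ i ∈ s, b i) / s.card) = ∑ i ∈ s, b i := by
      rcases s.eq_empty_or_nonempty with rfl | hs
      · simp
      · exact mul_div_cancel₀ _ (by positivity)
    cases r with
    | zero => simp
    | succ m =>
      rw [sum_powersetCard_succ_insert_prod b hx, card_insert_of_notMem hx, sum_insert hx]
      calc _ ≤ s.card.choose (m + 1) * ((∑ i ∈ s, b i) / s.card) ^ (m + 1) +
            b x * (s.card.choose m * ((∑ i ∈ s, b i) / s.card) ^ m) :=
            add_le_add (ih hbs _) (mul_le_mul_of_nonneg_left (ih hbs m) hbx)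
        _ ≤ _ := by
          convert choose_mul_pow_add_le (u := (∑ i ∈ s, b i) / s.card) (t := b x) s.card m
            (div_nonneg (sum_nonneg hbs) (by positivity)) hbx using 1
          · ring
          · rw [hmean, add_comm (b x)]; push_cast; rfl

end Maclaurin

section Permutations

variable {ι R : Type*} [Fintype ι] [CommSemiring R]

lemma sum_powersetCard_prod_comp_perm (b : ι → R) (π : Equiv.Perm ι) (r : ℕ) :
    ∑ B ∈ univ.powersetCard r, ∏ i ∈ B, b (π i) = ∑ B ∈ univ.powersetCard r, ∏ i ∈ B, b i := by
  conv_rhs => rw [← map_univ_equiv π, powersetCard_map, sum_map]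
  simp [prod_map]

variable [DecidableEq ι]

lemma sum_perm_prod_comp_eq_of_card_eq (b : ι → R) {A B : Finset ι} (h : A.card = B.card) :
    ∑ π : Equiv.Perm ι, ∏ i ∈ A, b (π i) = ∑ π : Equiv.Perm ι, ∏ i ∈ B, b (π i) := by
  set σ : Equiv.Perm ι := (equivOfCardEq h).extendSubtype
  have hσ : A.map σ.toEmbedding = B := by
    refine eq_of_subset_of_card_le (fun j hj => ?_) (by simp [h])
    obtain ⟨i, hi, rfl⟩ := mem_map.1 hj
    exact (equivOfCardEq h).extendSubtype_mem i hi
  rw [← hσ, ← Equiv.sum_comp (Equiv.mulRight σ)]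
  simp [prod_map]

lemma choose_mul_sum_perm_prod_comp (b : ι → R) (A : Finset ι) :
    (Fintype.card ι).choose A.card * ∑ π : Equiv.Perm ι, ∏ i ∈ A, b (π i) =
      (Fintype.card ι)! * ∑ B ∈ univ.powersetCard A.card, ∏ i ∈ B, b i := by
  calc _ = ∑ B ∈ univ.powersetCard A.card, ∑ π : Equiv.Perm ι, ∏ i ∈ B, b (π i) := by
        rw [sum_congr rfl fun B hB => sum_perm_prod_comp_eq_of_card_eq b (mem_powersetCard.1 hB).2,
          sum_const, card_powersetCard, Finset.card_univ, nsmul_eq_mul]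
    _ = _ := by
        rw [sum_comm, sum_congr rfl fun π _ => sum_powersetCard_prod_comp_perm b π A.card,
          sum_const, Finset.card_univ, Fintype.card_perm, nsmul_eq_mul]

lemma sum_perm_prod_comp_le {b : ι → ℝ} (hb : ∀ i, 0 ≤ b i) (A : Finset ι) :
    ∑ π : Equiv.Perm ι, ∏ i ∈ A, b (π i) ≤
      (Fintype.card ι)! * ((∑ i, b i) / Fintype.card ι) ^ A.card := by
  have hchoose : (0 : ℝ) < (Fintype.card ι).choose A.card :=
    cast_pos.2 (choose_pos (card_le_univ A))
  have maclaurin := sum_powersetCard_prod_le (s := univ) (fun i _ => hb i) A.card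
  rw [Finset.card_univ] at maclaurin
  refine le_of_mul_le_mul_left ?_ hchoose
  rw [choose_mul_sum_perm_prod_comp, mul_left_comm]
  exact mul_le_mul_of_nonneg_left maclaurin (by positivity)

end Permutations

section Moments

variable {ι : Type*} [DecidableEq ι]

lemma prod_comp_le_prod_image {κ : Type*} (t : Finset κ) (f : κ → ι) {c : ι → ℝ}
    (hc0 : ∀ i, 0 ≤ c i) (hc1 : ∀ i, c i ≤ 1) : ∏ l ∈ t, c (f l) ≤ ∏ i ∈ t.image f, c i := by
  rw [prod_comp]
  refine prod_le_prod (fun i _ => pow_nonneg (hc0 i) _) fun i hi =>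
    pow_le_of_le_one (hc0 i) (hc1 i) ?_
  obtain ⟨l, hl, rfl⟩ := mem_image.1 hi
  exact card_ne_zero_of_mem (mem_filter.2 ⟨hl, rfl⟩)

lemma image_univ_fin_cons {k : ℕ} (i : ι) (f : Fin k → ι) :
    univ.image (Fin.cons i f : Fin (k + 1) → ι) = insert i (univ.image f) := by
  apply coe_injective
  push_cast [coe_image, coe_univ, Set.image_univ]
  exact Fin.range_cons i f

variable [Fintype ι]

lemma sum_prod_insert_mul_pow_card_le {a : ι → ℝ} {m : ℝ} (ha : ∀ i, 0 ≤ a i) (hm : 0 ≤ m)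
    {R : Finset ι} {k : ℕ} (hR : R.card ≤ k) :
    ∑ i, (∏ j ∈ insert i R, a j) * m ^ (insert i R).card ≤
      (k + (∑ i, a i) * m) * ((∏ j ∈ R, a j) * m ^ R.card) := by
  have hw : 0 ≤ (∏ j ∈ R, a j) * m ^ R.card :=
    mul_nonneg (prod_nonneg fun j _ => ha j) (by positivity)
  have outside : ∑ i ∈ univ \ R, (∏ j ∈ insert i R, a j) * m ^ (insert i R).card =
      (∑ i ∈ univ \ R, a i) * m * ((∏ j ∈ R, a j) * m ^ R.card) := by
    rw [sum_mul, sum_mul]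
    refine sum_congr rfl fun i hi => ?_
    have hiR := (mem_sdiff.1 hi).2
    rw [prod_insert hiR, card_insert_of_notMem hiR, pow_succ]
    ring
  have inside : ∑ i ∈ R, (∏ j ∈ insert i R, a j) * m ^ (insert i R).card =
      R.card * ((∏ j ∈ R, a j) * m ^ R.card) := by
    rw [sum_congr rfl fun i hi => by rw [insert_eq_of_mem hi], sum_const, nsmul_eq_mul]
  have hsub : ∑ i ∈ univ \ R, a i ≤ ∑ i, a i :=
    sum_le_sum_of_subset_of_nonneg sdiff_subset fun i _ _ => ha i
  have hRk : (R.card : ℝ) ≤ k := by exact_mod_cast hR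
  rw [← sum_sdiff (subset_univ R), outside, inside]
  nlinarith [mul_le_mul_of_nonneg_right (mul_le_mul_of_nonneg_right hsub hm) hw,
    mul_le_mul_of_nonneg_right hRk hw]

lemma sum_prod_image_mul_pow_card_le {a : ι → ℝ} {m : ℝ} (ha : ∀ i, 0 ≤ a i) (hm : 0 ≤ m)
    (k : ℕ) :
    ∑ f : Fin k → ι, (∏ i ∈ univ.image f, a i) * m ^ (univ.image f).card ≤
      ∏ l ∈ range k, (l + (∑ i, a i) * m) := by
  induction k with
  | zero => simp
  | succ k ih =>
    calc _ = ∑ f : Fin k → ι, ∑ i, (∏ j ∈ insert i (univ.image f), a j) *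
            m ^ (insert i (univ.image f)).card := by
          rw [← (Fin.consEquiv fun _ => ι).sum_comp, Fintype.sum_prod_type, sum_comm]
          refine sum_congr rfl fun f _ => sum_congr rfl fun i _ => ?_
          rw [← image_univ_fin_cons]
          rfl
      _ ≤ ∑ f : Fin k → ι,
            (k + (∑ i, a i) * m) * ((∏ i ∈ univ.image f, a i) * m ^ (univ.image f).card) :=
          sum_le_sum fun f _ =>
            sum_prod_insert_mul_pow_card_le ha hm (card_image_le.trans (by simp))
      _ ≤ (k + (∑ i, a i) * m) * ∏ l ∈ range k, (l + (∑ i, a i) * m) := by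
          rw [← mul_sum]
          exact mul_le_mul_of_nonneg_left ih
            (add_nonneg k.cast_nonneg (mul_nonneg (sum_nonneg fun i _ => ha i) hm))
      _ = _ := by rw [prod_range_succ, mul_comm]

theorem sum_perm_sum_mul_comp_pow_le {a b : ι → ℝ} (ha0 : ∀ i, 0 ≤ a i) (ha1 : ∀ i, a i ≤ 1)
    (hb0 : ∀ i, 0 ≤ b i) (hb1 : ∀ i, b i ≤ 1) (k : ℕ) :
    ∑ π : Equiv.Perm ι, (∑ j, a j * b (π j)) ^ k ≤
      (Fintype.card ι)! * ∏ l ∈ range k, (l + (∑ i, a i) * ((∑ i, b i) / Fintype.card ι)) := by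
  set m := (∑ i, b i) / Fintype.card ι
  have hm : 0 ≤ m := div_nonneg (sum_nonneg fun i _ => hb0 i) (by positivity)
  have term_le (f : Fin k → ι) : ∑ π : Equiv.Perm ι, ∏ l, a (f l) * b (π (f l)) ≤
      (Fintype.card ι)! * ((∏ i ∈ univ.image f, a i) * m ^ (univ.image f).card) :=
    calc _ ≤ ∑ π : Equiv.Perm ι, ∏ i ∈ univ.image f, a i * b (π i) :=
          sum_le_sum fun π _ => prod_comp_le_prod_image univ f
            (fun i => mul_nonneg (ha0 i) (hb0 _)) fun i => mul_le_one₀ (ha1 i) (hb0 _) (hb1 _)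
      _ = (∏ i ∈ univ.image f, a i) * ∑ π : Equiv.Perm ι, ∏ i ∈ univ.image f, b (π i) := by
          simp only [prod_mul_distrib, mul_sum]
      _ ≤ (∏ i ∈ univ.image f, a i) * ((Fintype.card ι)! * m ^ (univ.image f).card) :=
          mul_le_mul_of_nonneg_left (sum_perm_prod_comp_le hb0 _) (prod_nonneg fun i _ => ha0 i)
      _ = _ := by ring
  calc _ = ∑ f : Fin k → ι, ∑ π : Equiv.Perm ι, ∏ l, a (f l) * b (π (f l)) := by
        simp only [Fintype.sum_pow]
        exact sum_comm
    _ ≤ (Fintype.card ι)! *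
          ∑ f : Fin k → ι, (∏ i ∈ univ.image f, a i) * m ^ (univ.image f).card := by
        rw [mul_sum]
        exact sum_le_sum fun f _ => term_le f
    _ ≤ _ := mul_le_mul_of_nonneg_left (sum_prod_image_mul_pow_card_le ha0 hm k) (by positivity)

end Moments

lemma prod_range_add_le {C m : ℝ} (hC : 0 < C) (hCm : C ≤ m) (k : ℕ) :
    ∏ l ∈ range k, (l + m) ≤ m ^ k * Real.exp (k * (k - 1) / (2 * C)) := by
  induction k with
  | zero => simp
  | succ k ih =>
    have hm : 0 < m := hC.trans_le hCm
    -- `k + m ≤ m (1 + k / C) ≤ m exp (k / C)` because `m ≥ C`.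
    have step : k + m ≤ m * Real.exp (k / C) := by
      have : (k : ℝ) ≤ m * (k / C) := by
        rw [mul_div_assoc', le_div_iff₀ hC]; nlinarith [k.cast_nonneg (α := ℝ)]
      nlinarith [Real.add_one_le_exp (k / C : ℝ)]
    rw [prod_range_succ]
    calc _ ≤ m ^ k * Real.exp (k * (k - 1) / (2 * C)) * (m * Real.exp (k / C)) :=
          mul_le_mul ih step (by positivity) (by positivity)
      _ = _ := by
          rw [mul_mul_mul_comm, ← pow_succ, ← Real.exp_add]
          congr 2
          field_simp
          push_cast
          ring

lemma prod_range_add_le_exp_ceil {C m γ : ℝ} (hC : 0 < C) (hCm : C ≤ m) (hγ : 0 ≤ γ) :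
    ∏ l ∈ range ⌈γ * C⌉₊, (l + m) ≤
      (Real.exp γ * m) ^ ⌈γ * C⌉₊ * Real.exp (-(γ ^ 2 * C) / 2) := by
  set k := ⌈γ * C⌉₊
  have hk1 : γ * C ≤ k := le_ceil _
  have hk2 : (k : ℝ) < γ * C + 1 := ceil_lt_add_one (by positivity)
  refine (prod_range_add_le hC hCm k).trans ?_
  rw [mul_pow, ← Real.exp_nat_mul, mul_right_comm, mul_comm, ← Real.exp_add]
  refine mul_le_mul_of_nonneg_right (Real.exp_le_exp.2 ?_) (pow_nonneg (hC.le.trans hCm) k)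
  -- With `δ = k - γ C ∈ [0, 1)`, this is `δ ^ 2 ≤ δ`.
  rw [div_le_iff₀ (by positivity)]
  nlinarith [mul_nonneg (sub_nonneg.2 hk1) (by linarith : (0 : ℝ) ≤ γ * C + 1 - k)]

lemma card_filter_le_mul_pow_le_sum_pow {α : Type*} [Fintype α] {X : α → ℝ} (hX : ∀ x, 0 ≤ X x)
    {t : ℝ} (ht : 0 ≤ t) (k : ℕ) : #{x | t ≤ X x} * t ^ k ≤ ∑ x, X x ^ k := by
  rw [← nsmul_eq_mul]
  calc _ ≤ ∑ x ∈ {x | t ≤ X x}, X x ^ k :=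
        card_nsmul_le_sum _ _ _ fun x hx => pow_le_pow_left₀ ht (mem_filter.1 hx).2 k
    _ ≤ _ := sum_le_sum_of_subset_of_nonneg (subset_univ _) fun x _ _ => pow_nonneg (hX x) k

section Tail

variable {ι : Type*} [Fintype ι] [DecidableEq ι] [Nonempty ι] {C γ : ℝ}

theorem card_exp_mul_mean_le_sum_mul_perm_le {a b : ι → ℝ} (ha0 : ∀ i, 0 ≤ a i)
    (ha1 : ∀ i, a i ≤ 1) (hb0 : ∀ i, 0 ≤ b i) (hb1 : ∀ i, b i ≤ 1) (hC : 0 < C) (hγ : 0 ≤ γ)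
    (hCN : C * Fintype.card ι ≤ (∑ i, a i) * ∑ i, b i) :
    (#{π : Equiv.Perm ι | Real.exp γ * ((∑ i, a i) * (∑ i, b i) / Fintype.card ι) ≤
        ∑ j, a j * b (π j)} : ℝ) ≤ (Fintype.card ι)! * Real.exp (-(γ ^ 2 * C) / 2) := by
  set m := (∑ i, a i) * (∑ i, b i) / Fintype.card ι
  have hCm : C ≤ m := (le_div_iff₀ (by exact_mod_cast Fintype.card_pos)).2 hCN
  have ht : 0 < Real.exp γ * m := by have := hC.trans_le hCm; positivity
  -- Markov's inequality for the `k`-th moment, with `k = ⌈γ C⌉`.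
  refine le_of_mul_le_mul_right ?_ (pow_pos ht ⌈γ * C⌉₊)
  calc _ ≤ ∑ π : Equiv.Perm ι, (∑ j, a j * b (π j)) ^ ⌈γ * C⌉₊ :=
        card_filter_le_mul_pow_le_sum_pow
          (fun π => sum_nonneg fun j _ => mul_nonneg (ha0 j) (hb0 _)) ht.le _
    _ ≤ (Fintype.card ι)! * ∏ l ∈ range ⌈γ * C⌉₊, (l + m) := by
        have := sum_perm_sum_mul_comp_pow_le ha0 ha1 hb0 hb1 ⌈γ * C⌉₊
        rwa [← mul_div_assoc] at this
    _ ≤ (Fintype.card ι)! * ((Real.exp γ * m) ^ ⌈γ * C⌉₊ * Real.exp (-(γ ^ 2 * C) / 2)) :=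
        mul_le_mul_of_nonneg_left (prod_range_add_le_exp_ceil hC hCm hγ) (by positivity)
    _ = _ := by ring

theorem card_exp_mul_mean_le_sum_mul_perm_le_of_bounded {x y : ι → ℝ} {α β : ℝ}
    (hx0 : ∀ i, 0 ≤ x i) (hxα : ∀ i, x i ≤ α) (hy0 : ∀ i, 0 ≤ y i) (hyβ : ∀ i, y i ≤ β)
    (hα : 0 < α) (hβ : 0 < β) (hC : 0 < C) (hγ : 0 ≤ γ)
    (hCN : C * Fintype.card ι ≤ ((∑ i, x i) / α) * ((∑ i, y i) / β)) :
    (#{π : Equiv.Perm ι | Real.exp γ * ((∑ i, x i) * (∑ i, y i) / Fintype.card ι) ≤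
        ∑ j, x j * y (π j)} : ℝ) ≤ (Fintype.card ι)! * Real.exp (-(γ ^ 2 * C) / 2) := by
  have normalized := card_exp_mul_mean_le_sum_mul_perm_le (a := fun i => x i / α)
    (b := fun i => y i / β) (fun i => div_nonneg (hx0 i) hα.le) (fun i => (div_le_one hα).2 (hxα i))
    (fun i => div_nonneg (hy0 i) hβ.le) (fun i => (div_le_one hβ).2 (hyβ i)) hC hγ
    (by simpa only [sum_div] using hCN)
  refine le_of_eq_of_le ?_ normalized
  congr 2
  ext π
  have hsum : ∑ j, x j / α * (y (π j) / β) = (∑ j, x j * y (π j)) / (α * β) := by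
    rw [sum_div]
    exact sum_congr rfl fun j _ => div_mul_div_comm _ _ _ _
  have hmean : Real.exp γ * ((∑ i, x i / α) * (∑ i, y i / β) / Fintype.card ι) =
      Real.exp γ * ((∑ i, x i) * (∑ i, y i) / Fintype.card ι) / (α * β) := by
    simp only [← sum_div]
    field_simp
  simp only [mem_filter, mem_univ, true_and, hsum, hmean]
  exact (div_le_div_iff_of_pos_right (by positivity)).symm

end Tail

section DoublyStochastic

variable {m n : Type*} [Fintype m] {M : Matrix m n ℝ} {x : m → ℝ}

lemma vecMul_nonneg (hM : ∀ i j, 0 ≤ M i j) (hx : ∀ i, 0 ≤ x i) (j : n) : 0 ≤ (x ᵥ* M) j :=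
  sum_nonneg fun i _ => mul_nonneg (hx i) (hM i j)

lemma vecMul_le_of_sum_col_eq_one (hM : ∀ i j, 0 ≤ M i j) (hcol : ∀ j, ∑ i, M i j = 1) {c : ℝ}
    (hx : ∀ i, x i ≤ c) (j : n) : (x ᵥ* M) j ≤ c :=
  calc (x ᵥ* M) j ≤ ∑ i, c * M i j :=
        sum_le_sum fun i _ => mul_le_mul_of_nonneg_right (hx i) (hM i j)
    _ = c := by rw [← mul_sum, hcol, mul_one]

lemma sum_vecMul_of_sum_row_eq_one [Fintype n] (hrow : ∀ i, ∑ j, M i j = 1) :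
    ∑ j, (x ᵥ* M) j = ∑ i, x i := by
  simp only [Matrix.vecMul, dotProduct]
  rw [sum_comm]
  simp [← mul_sum, hrow]

lemma sum_sum_erase_mul_le_sum_vecMul_mul [DecidableEq m] {y : m → ℝ} {M : Matrix m m ℝ}
    (hM : ∀ i j, 0 ≤ M i j) (hx : ∀ i, 0 ≤ x i) (hy : ∀ i, 0 ≤ y i) :
    ∑ i, ∑ j ∈ univ.erase i, M i j * (x i * y j) ≤ ∑ j, (x ᵥ* M) j * y j :=
  calc _ ≤ ∑ i, ∑ j, M i j * (x i * y j) := sum_le_sum fun i _ =>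
        sum_le_sum_of_subset_of_nonneg (erase_subset _ _) fun j _ _ =>
          mul_nonneg (hM i j) (mul_nonneg (hx i) (hy j))
    _ = _ := by
        rw [sum_comm]
        simp only [Matrix.vecMul, dotProduct, sum_mul]
        exact sum_congr rfl fun j _ => sum_congr rfl fun i _ => by ring

end DoublyStochastic

lemma abs_le_nlinf {N : ℕ} (u : Fin N → ℝ) (i : Fin N) : |u i| ≤ nlinf u :=
  le_ciSup (f := fun i => |u i|) (Set.finite_range _).bddAbove i

lemma le_nlinf {N : ℕ} (u : Fin N → ℝ) (i : Fin N) : u i ≤ nlinf u :=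
  (le_abs_self _).trans (abs_le_nlinf u i)

lemma nlinf_pos {N : ℕ} {u : Fin N → ℝ} (hu : u ≠ 0) : 0 < nlinf u := by
  obtain ⟨i, hi⟩ := Function.ne_iff.1 hu
  exact (abs_pos.2 hi).trans_le (abs_le_nlinf u i)

lemma nl1_eq_sum {N : ℕ} {u : Fin N → ℝ} (hu : ∀ i, 0 ≤ u i) : nl1 u = ∑ i, u i :=
  sum_congr rfl fun i _ => abs_of_nonneg (hu i)

theorem stmt8 (N : ℕ) (C γ : ℝ) (hC : 1 ≤ C) (hγ : 0 < γ)
    (u v : Fin N → ℝ) (hu : ∀ i, 0 ≤ u i) (hv : ∀ i, 0 ≤ v i)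
    (hu0 : u ≠ 0) (hv0 : v ≠ 0)
    (hratio : C * N ≤ (nl1 u / nlinf u) * (nl1 v / nlinf v))
    (D : Matrix (Fin N) (Fin N) ℝ) (hD0 : ∀ i j, 0 ≤ D i j)
    (hDrow : ∀ i, ∑ j, D i j = 1) (hDcol : ∀ j, ∑ i, D i j = 1) :
    ((Finset.univ.filter (fun τ : Equiv.Perm (Fin N) =>
          Real.exp γ * (nl1 u * nl1 v / N) ≤
            ∑ i, ∑ j ∈ Finset.univ.erase i, D i j * (u i * v (τ j)))).card : ℝ) /
        (Fintype.card (Equiv.Perm (Fin N)) : ℝ) ≤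
      (N : ℝ) ^ 2 * Real.exp (-(γ ^ 2 * C) / 2) := by
  obtain ⟨i₀, -⟩ := Function.ne_iff.1 hu0
  have : Nonempty (Fin N) := ⟨i₀⟩
  have hsum_u : ∑ j, (u ᵥ* D) j = nl1 u := by
    rw [sum_vecMul_of_sum_row_eq_one hDrow, nl1_eq_sum hu]
  have tail := card_exp_mul_mean_le_sum_mul_perm_le_of_bounded (C := C) (γ := γ)
    (vecMul_nonneg hD0 hu) (vecMul_le_of_sum_col_eq_one hD0 hDcol (le_nlinf u))
    hv (le_nlinf v) (nlinf_pos hu0) (nlinf_pos hv0) (by linarith) hγ.le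
    (by rwa [hsum_u, ← nl1_eq_sum hv, Fintype.card_fin])
  rw [hsum_u, ← nl1_eq_sum hv, Fintype.card_fin] at tail
  have hN : (1 : ℝ) ≤ N := by exact_mod_cast i₀.pos
  rw [Fintype.card_perm, Fintype.card_fin, div_le_iff₀ (by positivity)]
  calc _ ≤ (#{τ : Equiv.Perm (Fin N) | Real.exp γ * (nl1 u * nl1 v / N) ≤
          ∑ j, (u ᵥ* D) j * v (τ j)} : ℝ) := by
        refine cast_le.2 (card_le_card fun τ hτ => ?_)
        simp only [mem_filter, mem_univ, true_and] at hτ ⊢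
        exact hτ.trans (sum_sum_erase_mul_le_sum_vecMul_mul hD0 hu fun j => hv _)
    _ ≤ N ! * Real.exp (-(γ ^ 2 * C) / 2) := tail
    _ ≤ _ := by
        have : (0 : ℝ) ≤ N ! * Real.exp (-(γ ^ 2 * C) / 2) := by positivity
        nlinarith [mul_le_mul_of_nonneg_right (one_le_pow₀ hN : (1 : ℝ) ≤ N ^ 2) this]
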